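/- arXiv:2106.03655 — 5 statements merged into one kernel-verified Lean document; each statement's English description precedes it below -/
import Mathlib

section
/- If a convex polygon R with n boundary edges is tiled by finitely many convex polygonal tiles (a nondegenerate tiling whose tiles form the open 2-cells, whose maximal boundary segments form the open 1-cells, and whose vertices are the n corners of R), then the number of maximal segments exceeds the number of tiles by n-1; i.e., |W| = |B| - n + 1 where W is the set of tiles and B the set of maximal segments. -/
/-!
The identity is the Euler relation `χ(R) = 1` for the Euler characteristic with compact supports,
computed by sweeping horizontal lines. On a line, `χ` is the finite sum of the jumps
`1_S(x) - 1_S(x⁺)` of an indicator; it is additive on ℤ-combinations of indicators of bounded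
intervals, and equals `1` on compact and `-1` on open intervals. In the plane, the nonempty
horizontal slices of an open convex tile are open intervals, those of a corner a point, and those of
an open segment points or, for a horizontal segment, a single open interval; so tiles, segments and
corners contribute `1`, `-1` and `1`. As every nonempty slice of `R` is a compact interval, the
contributions add up to `χ(R) = 1`.
-/

open Set Filter Topology Bornology Function

lemma segment_diff_endpoints {E : Type*} [AddCommGroup E] [Module ℝ E] {x y : E} (h : x ≠ y) :
    segment ℝ x y \ {x, y} = openSegment ℝ x y := by
  have hx : x ∉ openSegment ℝ x y := fun hx => h (left_mem_openSegment_iff.1 hx)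
  have hy : y ∉ openSegment ℝ x y := fun hy => h (right_mem_openSegment_iff.1 hy)
  rw [← insert_endpoints_openSegment]
  ext z
  simp only [Set.mem_sdiff, mem_insert_iff, mem_singleton_iff]
  grind

lemma Pairwise.disjoint_sumElim {ι κ α : Type*} [PartialOrder α] [OrderBot α] {f : ι → α}
    {g : κ → α} (hf : Pairwise (Disjoint on f)) (hg : Pairwise (Disjoint on g))
    (hfg : ∀ i j, Disjoint (f i) (g j)) : Pairwise (Disjoint on Sum.elim f g) := by
  rintro (i | j) (i' | j') h
  · exact hf (ne_of_apply_ne Sum.inl h)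
  · exact hfg i j'
  · exact (hfg i' j).symm
  · exact hg (ne_of_apply_ne Sum.inr h)

noncomputable section

open Classical in
def rightIndicator (S : Set ℝ) (x : ℝ) : ℤ := if S ∈ 𝓝[>] x then 1 else 0

def eulerJump (S : Set ℝ) (x : ℝ) : ℤ := S.indicator 1 x - rightIndicator S x

/-- The Euler characteristic with compact supports of a finite union of intervals; `∑ᶠ` makes it
`0` on sets with infinitely many jumps. -/
def eulerChar (S : Set ℝ) : ℤ := ∑ᶠ x, eulerJump S x

section OneDim

variable {S : Set ℝ} {a b x : ℝ}

lemma rightIndicator_of_mem (h : S ∈ 𝓝[>] x) : rightIndicator S x = 1 := if_pos h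

lemma rightIndicator_of_compl_mem (h : Sᶜ ∈ 𝓝[>] x) : rightIndicator S x = 0 :=
  if_neg fun hS => compl_notMem hS h

lemma Set.OrdConnected.Ioo_csInf_csSup_subset (hS : S.OrdConnected) (hb : IsBounded S) :
    Ioo (sInf S) (sSup S) ⊆ S := by
  rcases S.eq_empty_or_nonempty with rfl | hne
  · simp
  · exact IsConnected.Ioo_csInf_csSup_subset ⟨hne, hS.isPreconnected⟩ hb.bddBelow hb.bddAbove

lemma Set.OrdConnected.mem_nhdsGT_or_compl_mem (hS : S.OrdConnected) (hb : IsBounded S) (x : ℝ) :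
    S ∈ 𝓝[>] x ∨ Sᶜ ∈ 𝓝[>] x := by
  have hIcc := subset_Icc_csInf_csSup hb.bddBelow hb.bddAbove
  rcases lt_or_ge x (sInf S) with hxa | hax
  · exact .inr (mem_of_superset (Ioo_mem_nhdsGT hxa) fun t ht htS => (hIcc htS).1.not_gt ht.2)
  rcases lt_or_ge x (sSup S) with hxb | hbx
  · exact .inl (mem_of_superset (Ioo_mem_nhdsGT hxb) fun t ht =>
      hS.Ioo_csInf_csSup_subset hb ⟨hax.trans_lt ht.1, ht.2⟩)
  · exact .inr (mem_of_superset self_mem_nhdsWithin fun t ht htS =>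
      (hIcc htS).2.not_gt (hbx.trans_lt ht))

lemma eventually_indicator_eq_rightIndicator (hS : S.OrdConnected) (hb : IsBounded S) (x : ℝ) :
    ∀ᶠ t in 𝓝[>] x, S.indicator (1 : ℝ → ℤ) t = rightIndicator S x := by
  rcases hS.mem_nhdsGT_or_compl_mem hb x with h | h
  · filter_upwards [h] with t ht
    simp [ht, rightIndicator_of_mem h]
  · filter_upwards [h] with t ht
    simp [notMem_of_mem_compl ht, rightIndicator_of_compl_mem h]

lemma support_eulerJump_subset (hS : S.OrdConnected) (hb : IsBounded S) :
    support (eulerJump S) ⊆ {sInf S, sSup S} := by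
  intro x hx
  by_contra hab
  simp only [mem_insert_iff, mem_singleton_iff, not_or] at hab
  have hIcc := subset_Icc_csInf_csSup hb.bddBelow hb.bddAbove
  apply hx
  by_cases hx' : x ∈ Icc (sInf S) (sSup S)
  · have hIoo : Ioo (sInf S) (sSup S) ∈ 𝓝 x :=
      isOpen_Ioo.mem_nhds ⟨hx'.1.lt_of_ne' hab.1, hx'.2.lt_of_ne hab.2⟩
    rw [eulerJump, indicator_of_mem (hS.Ioo_csInf_csSup_subset hb (mem_of_mem_nhds hIoo)),
      rightIndicator_of_mem (mem_nhdsWithin_of_mem_nhds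
        (mem_of_superset hIoo (hS.Ioo_csInf_csSup_subset hb)))]
    rfl
  · have hcompl : Sᶜ ∈ 𝓝 x :=
      mem_of_superset (isClosed_Icc.isOpen_compl.mem_nhds hx') (compl_subset_compl.2 hIcc)
    rw [eulerJump, indicator_of_notMem fun h => hx' (hIcc h),
      rightIndicator_of_compl_mem (mem_nhdsWithin_of_mem_nhds hcompl)]
    rfl

theorem eulerChar_eq_sum_mul {ι : Type*} [Fintype ι] {S : ι → Set ℝ}
    (hS : ∀ i, (S i).OrdConnected) (hb : ∀ i, IsBounded (S i)) (c : ι → ℤ) {T : Set ℝ}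
    (hT : ∀ x, T.indicator 1 x = ∑ i, c i * (S i).indicator 1 x) :
    eulerChar T = ∑ i, c i * eulerChar (S i) := by
  -- just right of `x` each `S i` is entered or avoided, so the relation passes to right limits
  have hright (x : ℝ) : rightIndicator T x = ∑ i, c i * rightIndicator (S i) x := by
    have hev : ∀ᶠ t in 𝓝[>] x,
        T.indicator (1 : ℝ → ℤ) t = ∑ i, c i * rightIndicator (S i) x := by
      filter_upwards [eventually_all.2 fun i =>
        eventually_indicator_eq_rightIndicator (hS i) (hb i) x] with t ht
      simp only [hT, ht]
    by_cases hTx : ∀ᶠ t in 𝓝[>] x, t ∈ T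
    · obtain ⟨t, htT, ht⟩ := (hTx.and hev).exists
      rw [rightIndicator_of_mem (S := T) hTx, ← ht, indicator_of_mem htT, Pi.one_apply]
    · obtain ⟨t, htT, ht⟩ := ((not_eventually.1 hTx).and_eventually hev).exists
      rw [rightIndicator, if_neg (show T ∉ 𝓝[>] x from hTx), ← ht, indicator_of_notMem htT]
  have hjump (x : ℝ) : eulerJump T x = ∑ i, c i * eulerJump (S i) x := by
    simp only [eulerJump, hT, hright, mul_sub, Finset.sum_sub_distrib]
  calc eulerChar T = ∑ᶠ x, ∑ i, c i * eulerJump (S i) x := finsum_congr hjump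
    _ = ∑ i, ∑ᶠ x, c i * eulerJump (S i) x :=
      finsum_sum_comm _ _ fun i _ => ((toFinite _).subset
        (support_eulerJump_subset (hS i) (hb i))).subset (support_mul_subset_right _ _)
    _ = ∑ i, c i * eulerChar (S i) := by simp only [eulerChar, mul_finsum]

theorem eulerChar_iUnion {ι : Type*} [Fintype ι] {S : ι → Set ℝ}
    (hS : ∀ i, (S i).OrdConnected) (hb : ∀ i, IsBounded (S i)) (hd : Pairwise (Disjoint on S)) :
    eulerChar (⋃ i, S i) = ∑ i, eulerChar (S i) := by
  simpa using eulerChar_eq_sum_mul hS hb 1 fun x => by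
    simpa using Finset.indicator_biUnion_apply Finset.univ S (hd.set_pairwise _) x

lemma eulerChar_empty : eulerChar ∅ = 0 := by
  simp [eulerChar, eulerJump, rightIndicator_of_compl_mem (S := ∅) (by simp)]

lemma eulerChar_Icc (hab : a ≤ b) : eulerChar (Icc a b) = 1 := by
  have hb : eulerJump (Icc a b) b = 1 := by
    rw [eulerJump, indicator_of_mem (right_mem_Icc.2 hab), rightIndicator_of_compl_mem
      (mem_of_superset self_mem_nhdsWithin fun t ht h => (h.2.trans_lt ht).false)]
    rfl
  have hsupp :=
    support_eulerJump_subset (S := Icc a b) ordConnected_Icc (Metric.isBounded_Icc a b)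
  rw [csInf_Icc hab, csSup_Icc hab] at hsupp
  refine (finsum_eq_single _ b fun x hx => ?_).trans hb
  by_cases hxa : x = a
  · subst hxa
    rw [eulerJump, indicator_of_mem (left_mem_Icc.2 hab), rightIndicator_of_mem
      (mem_of_superset (Ioo_mem_nhdsGT (hab.lt_of_ne hx)) Ioo_subset_Icc_self)]
    rfl
  · exact notMem_support.1 fun h => by simpa [hxa, hx] using hsupp h

lemma eulerChar_Ioo (hab : a < b) : eulerChar (Ioo a b) = -1 := by
  have ha : eulerJump (Ioo a b) a = -1 := by
    rw [eulerJump, indicator_of_notMem left_notMem_Ioo,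
      rightIndicator_of_mem (Ioo_mem_nhdsGT hab)]
    rfl
  have hsupp :=
    support_eulerJump_subset (S := Ioo a b) ordConnected_Ioo (Metric.isBounded_Ioo a b)
  rw [csInf_Ioo hab, csSup_Ioo hab] at hsupp
  refine (finsum_eq_single _ a fun x hx => ?_).trans ha
  by_cases hxb : x = b
  · subst hxb
    rw [eulerJump, indicator_of_notMem right_notMem_Ioo, rightIndicator_of_compl_mem
      (mem_of_superset self_mem_nhdsWithin fun t ht h => (h.2.trans ht).false)]
    rfl
  · exact notMem_support.1 fun h => by simpa [hxb, hx] using hsupp h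

lemma eulerChar_of_isCompact (hS : S.OrdConnected) (hc : IsCompact S) (hne : S.Nonempty) :
    eulerChar S = 1 := by
  rw [eq_Icc_csInf_csSup_of_connected_bdd_closed ⟨hne, hS.isPreconnected⟩ hc.bddBelow
    hc.bddAbove hc.isClosed]
  exact eulerChar_Icc (csInf_le_csSup hne hc.bddBelow hc.bddAbove)

lemma eulerChar_of_isOpen (hS : S.OrdConnected) (ho : IsOpen S) (hb : IsBounded S)
    (hne : S.Nonempty) : eulerChar S = -1 := by
  have hIoo : S = Ioo (sInf S) (sSup S) := (hS.Ioo_csInf_csSup_subset hb).antisymm' <|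
    interior_Icc (a := sInf S) ▸
      interior_maximal (subset_Icc_csInf_csSup hb.bddBelow hb.bddAbove) ho
  rw [hIoo] at hne ⊢
  exact eulerChar_Ioo (nonempty_Ioo.1 hne)

end OneDim

def slice (A : Set (ℝ × ℝ)) (y : ℝ) : Set ℝ := (·, y) ⁻¹' A

/-- `A` has Euler characteristic `e` by Fubini over horizontal slices: all its nonempty slices
have the same characteristic `c`, and `e = c · χ(π₂ A)`. -/
def HasEulerChar (A : Set (ℝ × ℝ)) (e : ℤ) : Prop :=
  ∃ c : ℤ, (∀ y ∈ Prod.snd '' A, eulerChar (slice A y) = c) ∧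
    c * eulerChar (Prod.snd '' A) = e

section Slices

variable {A : Set (ℝ × ℝ)}

lemma slice_nonempty_iff {y : ℝ} : (slice A y).Nonempty ↔ y ∈ Prod.snd '' A :=
  ⟨fun ⟨x, hx⟩ => ⟨(x, y), hx, rfl⟩,
    fun ⟨p, hp, hy⟩ => ⟨p.1, by simpa [slice, ← hy] using hp⟩⟩

lemma Convex.ordConnected_slice (hA : Convex ℝ A) (y : ℝ) : (slice A y).OrdConnected :=
  ⟨fun x₁ h₁ x₂ h₂ _ hx => hA.segment_subset h₁ h₂ <|
    Prod.image_mk_segment_left (𝕜 := ℝ) x₁ x₂ y ▸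
      mem_image_of_mem _ (Icc_subset_segment hx)⟩

lemma Bornology.IsBounded.slice (hA : IsBounded A) (y : ℝ) : IsBounded (slice A y) :=
  hA.image_fst.subset fun x hx => ⟨(x, y), hx, rfl⟩

lemma IsCompact.slice (hA : IsCompact A) (y : ℝ) : IsCompact (slice A y) :=
  (hA.image continuous_fst).of_isClosed_subset (hA.isClosed.preimage (by fun_prop))
    fun x hx => ⟨(x, y), hx, rfl⟩

lemma Convex.ordConnected_image_snd (hA : Convex ℝ A) : (Prod.snd '' A).OrdConnected :=
  (hA.linear_image (LinearMap.snd ℝ ℝ ℝ)).ordConnected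

lemma eulerChar_slice_eq_mul_indicator {c : ℤ}
    (h : ∀ y ∈ Prod.snd '' A, eulerChar (slice A y) = c) (y : ℝ) :
    eulerChar (slice A y) = c * (Prod.snd '' A).indicator 1 y := by
  by_cases hy : y ∈ Prod.snd '' A
  · simp [h y hy, hy]
  · rw [not_nonempty_iff_eq_empty.1 (slice_nonempty_iff.not.2 hy), eulerChar_empty,
      indicator_of_notMem hy, mul_zero]

theorem hasEulerChar_of_isOpen (hA : Convex ℝ A) (ho : IsOpen A)
    (hb : IsBounded A) (hne : A.Nonempty) : HasEulerChar A 1 :=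
  ⟨-1, fun y hy => eulerChar_of_isOpen (hA.ordConnected_slice y)
      (ho.preimage (by fun_prop)) (hb.slice y) (slice_nonempty_iff.2 hy),
    by rw [eulerChar_of_isOpen hA.ordConnected_image_snd (isOpenMap_snd _ ho) hb.image_snd
      (hne.image _)]; rfl⟩

theorem hasEulerChar_singleton (v : ℝ × ℝ) : HasEulerChar {v} 1 :=
  ⟨1, fun y hy => by
    obtain rfl : y = v.2 := by simpa [eq_comm] using hy
    rw [show slice {v} v.2 = {v.1} by ext; simp [slice, Prod.ext_iff], ← Icc_self,
      eulerChar_Icc le_rfl],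
    by rw [image_singleton, ← Icc_self, eulerChar_Icc le_rfl]; rfl⟩

lemma image_snd_openSegment (p q : ℝ × ℝ) :
    Prod.snd '' openSegment ℝ p q = openSegment ℝ p.2 q.2 :=
  image_openSegment ℝ (LinearMap.snd ℝ ℝ ℝ).toAffineMap p q

lemma slice_openSegment_subsingleton {p q : ℝ × ℝ} (h : p.2 ≠ q.2) (y : ℝ) :
    (slice (openSegment ℝ p q) y).Subsingleton := by
  rw [slice, openSegment_eq_image_lineMap]
  rintro x₁ ⟨θ₁, -, h₁⟩ x₂ ⟨θ₂, -, h₂⟩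
  have hθ : θ₁ = θ₂ := AffineMap.lineMap_injective ℝ h <| by
    simpa [AffineMap.snd_lineMap] using
      (congrArg Prod.snd h₁).trans (congrArg Prod.snd h₂).symm
  simpa [hθ, h₂] using congrArg Prod.fst h₁.symm

theorem hasEulerChar_openSegment {p q : ℝ × ℝ} (hpq : p ≠ q) :
    HasEulerChar (openSegment ℝ p q) (-1) := by
  by_cases h : p.2 = q.2
  · have h₁ : p.1 ≠ q.1 := fun h₁ => hpq (Prod.ext h₁ h)
    have hsnd : Prod.snd '' openSegment ℝ p q = {p.2} := by
      rw [image_snd_openSegment, ← h, openSegment_same]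
    refine ⟨-1, fun y hy => ?_, ?_⟩
    · obtain rfl : y = p.2 := by rwa [hsnd] at hy
      have hseg : openSegment ℝ p q = (·, p.2) '' openSegment ℝ p.1 q.1 := by
        rw [Prod.image_mk_openSegment_left]; exact congrArg _ (Prod.ext rfl h.symm)
      rw [slice, hseg, (Prod.mk_left_injective p.2).preimage_image, openSegment_eq_Ioo' h₁,
        eulerChar_Ioo (min_lt_max.2 h₁)]
    · rw [hsnd, ← Icc_self, eulerChar_Icc le_rfl]; rfl
  · refine ⟨1, fun y hy => ?_, ?_⟩
    · obtain ⟨x, hx⟩ := slice_nonempty_iff.2 hy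
      rw [(slice_openSegment_subsingleton h y).eq_singleton_of_mem hx, ← Icc_self,
        eulerChar_Icc le_rfl]
    · rw [image_snd_openSegment, openSegment_eq_Ioo' h, eulerChar_Ioo (min_lt_max.2 h)]; rfl

theorem sum_eq_one_of_hasEulerChar_of_partition {ι : Type*} [Fintype ι] {R : Set (ℝ × ℝ)}
    (hRconv : Convex ℝ R) (hRcomp : IsCompact R) (hRne : R.Nonempty)
    {P : ι → Set (ℝ × ℝ)} (hPconv : ∀ i, Convex ℝ (P i))
    (hPdisj : Pairwise (Disjoint on P)) (hPcover : ⋃ i, P i = R) {e : ι → ℤ}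
    (he : ∀ i, HasEulerChar (P i) (e i)) :
    ∑ i, e i = 1 := by
  choose c hc hce using he
  have hPb (i : ι) : IsBounded (P i) := hRcomp.isBounded.subset (hPcover ▸ subset_iUnion P i)
  have hRslice : ∀ y ∈ Prod.snd '' R, eulerChar (slice R y) = 1 := fun y hy =>
    eulerChar_of_isCompact (hRconv.ordConnected_slice y) (hRcomp.slice y)
      (slice_nonempty_iff.2 hy)
  have hfubini (y : ℝ) :
      (Prod.snd '' R).indicator 1 y = ∑ i, c i * (Prod.snd '' P i).indicator 1 y := by
    have hunion : slice R y = ⋃ i, slice (P i) y := by rw [← hPcover]; exact preimage_iUnion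
    calc (Prod.snd '' R).indicator 1 y = eulerChar (slice R y) := by
          simpa using (eulerChar_slice_eq_mul_indicator hRslice y).symm
      _ = ∑ i, eulerChar (slice (P i) y) := hunion ▸ eulerChar_iUnion
          (fun i => (hPconv i).ordConnected_slice y) (fun i => (hPb i).slice y)
          fun i j hij => (hPdisj hij).preimage _
      _ = ∑ i, c i * (Prod.snd '' P i).indicator 1 y := by
          simp only [eulerChar_slice_eq_mul_indicator (hc _)]
  calc ∑ i, e i = ∑ i, c i * eulerChar (Prod.snd '' P i) := by simp only [hce]
    _ = eulerChar (Prod.snd '' R) :=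
      (eulerChar_eq_sum_mul (fun i => (hPconv i).ordConnected_image_snd)
        (fun i => (hPb i).image_snd) c hfubini).symm
    _ = 1 := eulerChar_of_isCompact hRconv.ordConnected_image_snd (hRcomp.image continuous_snd)
      (hRne.image _)

end Slices

end

theorem number_of_segments_exceeds_tiles_general
    {W B : Type} [Fintype W] [Fintype B]
    (n : ℕ)
    (corner : Fin n → ℝ × ℝ) (hcorner : Function.Injective corner)
    (R : Set (ℝ × ℝ))
    (hRhull : R = convexHull ℝ (Set.range corner))
    (hRint : (interior R).Nonempty)
    (tile : W → Set (ℝ × ℝ))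
    (htconv : ∀ w, Convex ℝ (tile w))
    (htint : ∀ w, (interior (tile w)).Nonempty)
    (segEnd₁ segEnd₂ : B → ℝ × ℝ)
    (hsegnd : ∀ b, segEnd₁ b ≠ segEnd₂ b)
    -- the open cells of the subdivision partition R:
    (hcover : R = (⋃ w, interior (tile w)) ∪
        (⋃ b, segment ℝ (segEnd₁ b) (segEnd₂ b) \ {segEnd₁ b, segEnd₂ b}) ∪
        Set.range corner)
    (hdisjWW : ∀ w w', w ≠ w' → interior (tile w) ∩ interior (tile w') = ∅)
    (hdisjBB : ∀ b b', b ≠ b' →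
        (segment ℝ (segEnd₁ b) (segEnd₂ b) \ {segEnd₁ b, segEnd₂ b}) ∩
        (segment ℝ (segEnd₁ b') (segEnd₂ b') \ {segEnd₁ b', segEnd₂ b'}) = ∅)
    (hdisjWB : ∀ w b, interior (tile w) ∩
        (segment ℝ (segEnd₁ b) (segEnd₂ b) \ {segEnd₁ b, segEnd₂ b}) = ∅)
    (hdisjWV : ∀ w, interior (tile w) ∩ Set.range corner = ∅)
    (hdisjBV : ∀ b, (segment ℝ (segEnd₁ b) (segEnd₂ b) \ {segEnd₁ b, segEnd₂ b}) ∩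
        Set.range corner = ∅) :
    (Fintype.card W : ℤ) = (Fintype.card B : ℤ) - n + 1 := by
  have hRcomp : IsCompact R := hRhull ▸ (finite_range corner).isCompact_convexHull ℝ
  simp only [segment_diff_endpoints (hsegnd _), ← disjoint_iff_inter_eq_empty]
    at hcover hdisjWW hdisjBB hdisjWB hdisjWV hdisjBV
  let cell : W ⊕ B ⊕ Fin n → Set (ℝ × ℝ) := Sum.elim (fun w => interior (tile w))
    (Sum.elim (fun b => openSegment ℝ (segEnd₁ b) (segEnd₂ b)) fun k => {corner k})
  have hcover' : ⋃ i, cell i = R := by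
    simp only [cell, iUnion_sumElim, iUnion_singleton_eq_range, hcover, union_assoc]
  have hcorner_range (k : Fin n) : {corner k} ⊆ range corner :=
    singleton_subset_iff.2 (mem_range_self k)
  have hdisj : Pairwise (Disjoint on cell) :=
    .disjoint_sumElim hdisjWW
      (.disjoint_sumElim hdisjBB (fun k k' h => disjoint_singleton.2 (hcorner.ne h))
        fun b k => (hdisjBV b).mono_right (hcorner_range k))
      fun w => Sum.rec (hdisjWB w) fun k => (hdisjWV w).mono_right (hcorner_range k)
  let weight : W ⊕ B ⊕ Fin n → ℤ := Sum.elim 1 (Sum.elim (-1) 1)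
  have hweight : ∑ i, weight i = Fintype.card W - Fintype.card B + n := by
    simp [weight, Fintype.sum_sum_type, sub_eq_add_neg, add_assoc]
  have key := sum_eq_one_of_hasEulerChar_of_partition (hRhull ▸ convex_convexHull ℝ _) hRcomp
    (hRint.mono interior_subset) (P := cell) (e := weight)
    (by rintro (w | b | k) <;> simp [cell, (htconv _).interior, convex_openSegment])
    hdisj hcover'
    (by rintro (w | b | k)
        · exact hasEulerChar_of_isOpen (htconv w).interior isOpen_interior
            (hRcomp.isBounded.subset (hcover' ▸ subset_iUnion cell (.inl w))) (htint w)
        · exact hasEulerChar_openSegment (hsegnd b)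
        · exact hasEulerChar_singleton (corner k))
  linarith

/-- If a convex polygon `R` with `n` boundary edges (equivalently `n` corners)
is tiled nondegenerately by finitely many convex polygonal tiles, where the open 2-cells
are the tile interiors, the open 1-cells are the (open) maximal segments of the union of
tile boundaries, and the 0-cells are exactly the `n` corners of `R`, then
`|W| = |B| - n + 1`, where `W` indexes the tiles and `B` the maximal segments. -/
theorem number_of_segments_exceeds_tiles
    {W B : Type} [Fintype W] [Fintype B]
    (n : ℕ) (hn : 3 ≤ n)
    (corner : Fin n → ℝ × ℝ) (hcorner : Function.Injective corner)
    (R : Set (ℝ × ℝ))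
    (hRhull : R = convexHull ℝ (Set.range corner))
    (hRint : (interior R).Nonempty)
    (tile : W → Set (ℝ × ℝ))
    (htconv : ∀ w, Convex ℝ (tile w))
    (htcomp : ∀ w, IsCompact (tile w))
    (htint : ∀ w, (interior (tile w)).Nonempty)
    (segEnd₁ segEnd₂ : B → ℝ × ℝ)
    (hsegnd : ∀ b, segEnd₁ b ≠ segEnd₂ b)
    -- the open cells of the subdivision partition R:
    (hcover : R = (⋃ w, interior (tile w)) ∪
        (⋃ b, segment ℝ (segEnd₁ b) (segEnd₂ b) \ {segEnd₁ b, segEnd₂ b}) ∪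
        Set.range corner)
    (hdisjWW : ∀ w w', w ≠ w' → interior (tile w) ∩ interior (tile w') = ∅)
    (hdisjBB : ∀ b b', b ≠ b' →
        (segment ℝ (segEnd₁ b) (segEnd₂ b) \ {segEnd₁ b, segEnd₂ b}) ∩
        (segment ℝ (segEnd₁ b') (segEnd₂ b') \ {segEnd₁ b', segEnd₂ b'}) = ∅)
    (hdisjWB : ∀ w b, interior (tile w) ∩
        (segment ℝ (segEnd₁ b) (segEnd₂ b) \ {segEnd₁ b, segEnd₂ b}) = ∅)
    (hdisjWV : ∀ w, interior (tile w) ∩ Set.range corner = ∅)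
    (hdisjBV : ∀ b, (segment ℝ (segEnd₁ b) (segEnd₂ b) \ {segEnd₁ b, segEnd₂ b}) ∩
        Set.range corner = ∅)
    -- the tile boundaries are covered by the (closed) segments:
    (hbdry : (⋃ w, frontier (tile w)) = ⋃ b, segment ℝ (segEnd₁ b) (segEnd₂ b)) :
    (Fintype.card W : ℤ) = (Fintype.card B : ℤ) - n + 1 :=
  number_of_segments_exceeds_tiles_general n corner hcorner R hRhull hRint tile htconv htint segEnd₁
    segEnd₂ hsegnd hcover hdisjWW hdisjBB hdisjWB hdisjWV hdisjBV
end

section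
/- Any Kasteleyn matrix with complex unimodular signs is diagonally equivalent (via diagonal matrices with unimodular entries) to a Kasteleyn matrix with real signs ±1. That is, if c: E → U(1) satisfies that the alternating product of c around every bounded face of degree 2ℓ equals (-1)^{ℓ+1}, then there exist unimodular functions g: W → U(1), h: B → U(1) such that g(w) c_{wb} h(b) ∈ {±1} for every edge wb. -/
/-! Write `c = exp (i θ)` on the edges. The face condition says that the alternating sum of `θ`
around every face lies in `πℤ`, so the `ℝ/πℤ`-valued edge function `θ` pairs to zero with every
face chain, hence with every cycle. As `ℝ/πℤ` is divisible, hence an injective `ℤ`-module, a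
homomorphism on edge chains killing all cycles factors through the boundary map:
`θ (w, b) = x w + y b` in `ℝ/πℤ`. Lifting `x` and `y` to `ℝ`, the gauge `g = exp (-i x)`,
`h = exp (-i y)` turns every `c (w, b)` into `exp (i k π) = ±1`. -/

/-- The cyclic successor on `Fin n`. -/
def cyc {n : ℕ} (i : Fin n) : Fin n := ⟨(i.1 + 1) % n, Nat.mod_lt _ i.pos⟩

/-- The alternating product of a complex edge function `c` around a face with white
vertices `wv f i` and black vertices `bv f i` in cyclic order (a face of degree
`2 ℓ f`). -/
noncomputable def faceAltProd {W B F : Type} (ℓ : F → ℕ)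
    (wv : (f : F) → Fin (ℓ f) → W) (bv : (f : F) → Fin (ℓ f) → B)
    (c : W → B → ℂ) (f : F) : ℂ :=
  (∏ i, c (wv f i) (bv f i)) / ∏ i, c (wv f (cyc i)) (bv f i)

/-- The 1-chain (element of `ℤ^{W×B}`) of a face. -/
def faceChain {W B F : Type} [DecidableEq W] [DecidableEq B] (ℓ : F → ℕ)
    (wv : (f : F) → Fin (ℓ f) → W) (bv : (f : F) → Fin (ℓ f) → B)
    (f : F) : W × B → ℤ :=
  fun e => ∑ i, ((if (wv f i, bv f i) = e then (1 : ℤ) else 0)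
    - (if (wv f (cyc i), bv f i) = e then (1 : ℤ) else 0))

open Complex
open scoped Real

theorem Module.Baer.exists_comp_eq_of_ker_le {R Q M N : Type*} [Ring R] [AddCommGroup Q]
    [Module R Q] [AddCommGroup M] [Module R M] [AddCommGroup N] [Module R N]
    (hQ : Module.Baer R Q) (D : M →ₗ[R] N) (Θ : M →ₗ[R] Q)
    (hker : LinearMap.ker D ≤ LinearMap.ker Θ) :
    ∃ ψ : N →ₗ[R] Q, ψ ∘ₗ D = Θ := by
  obtain ⟨ψ, hψ⟩ := hQ.extension_property ((LinearMap.ker D).liftQ D le_rfl)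
    (LinearMap.ker_eq_bot.mp (Submodule.ker_liftQ_eq_bot _ _ _ le_rfl))
    ((LinearMap.ker D).liftQ Θ hker)
  exact ⟨ψ, by ext m; simpa using congr($hψ (Submodule.Quotient.mk m))⟩

section VertexPotential

variable {W B : Type}

def edgeChains (E : W → B → Prop) : Submodule ℤ (W × B → ℤ) where
  carrier := {ch | ∀ w b, ¬ E w b → ch (w, b) = 0}
  add_mem' ha hb w b hwb := by simp [ha w b hwb, hb w b hwb]
  zero_mem' _ _ _ := rfl
  smul_mem' r _ hch w b hwb := by simp [hch w b hwb]

theorem single_mem_edgeChains [DecidableEq W] [DecidableEq B] {E : W → B → Prop} {w : W} {b : B}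
    (h : E w b) : Pi.single (w, b) 1 ∈ edgeChains E := by
  intro w' b' h'
  have : (w', b') ≠ (w, b) := by rintro ⟨⟩; exact h' h
  simp [this]

variable [Fintype W] [Fintype B]

def chainBoundary : (W × B → ℤ) →ₗ[ℤ] (W → ℤ) × (B → ℤ) where
  toFun ch := (fun w => ∑ b, ch (w, b), fun b => ∑ w, ch (w, b))
  map_add' _ _ := by ext <;> simp [Finset.sum_add_distrib]
  map_smul' _ _ := by ext <;> simp [Finset.mul_sum]

theorem chainBoundary_single [DecidableEq W] [DecidableEq B] (w : W) (b : B) :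
    chainBoundary (Pi.single (w, b) 1) = (Pi.single w 1, Pi.single b 1) := by
  ext v
  · by_cases hv : v = w <;> simp [chainBoundary, Pi.single_apply, hv, Finset.filter_eq']
  · by_cases hv : v = b <;> simp [chainBoundary, Pi.single_apply, hv, Finset.filter_eq']

theorem exists_potential_of_cycle_sums_eq_zero {A : Type*} [AddCommGroup A] [DivisibleBy A ℤ]
    [DecidableEq W] [DecidableEq B] (E : W → B → Prop) (u : W × B → A)
    (hu : ∀ ch ∈ edgeChains E, chainBoundary ch = 0 → Fintype.linearCombination ℤ u ch = 0) :
    ∃ x : W → A, ∃ y : B → A, ∀ w b, E w b → u (w, b) = x w + y b := by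
  obtain ⟨ψ, hψ⟩ := (Module.Baer.of_divisible A).exists_comp_eq_of_ker_le
    (chainBoundary ∘ₗ (edgeChains E).subtype)
    (Fintype.linearCombination ℤ u ∘ₗ (edgeChains E).subtype) fun ch hch => hu ch ch.2 hch
  refine ⟨fun w => ψ (Pi.single w 1, 0), fun b => ψ (0, Pi.single b 1), fun w b h => ?_⟩
  have hedge := congr($hψ ⟨_, single_mem_edgeChains h⟩)
  simp only [LinearMap.comp_apply, Submodule.subtype_apply, chainBoundary_single,
    Fintype.linearCombination_apply_single, one_smul] at hedge
  rw [← hedge, ← map_add, Prod.mk_add_mk, add_zero, zero_add]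

end VertexPotential

section Faces

variable {W B F : Type} [DecidableEq W] [DecidableEq B] (ℓ : F → ℕ)
  (wv : (f : F) → Fin (ℓ f) → W) (bv : (f : F) → Fin (ℓ f) → B)

theorem faceChain_eq_sum (f : F) :
    faceChain ℓ wv bv f =
      ∑ i, (Pi.single (wv f i, bv f i) 1 - Pi.single (wv f (cyc i), bv f i) 1) := by
  ext e
  simp [faceChain, Finset.sum_apply, Pi.single_apply, eq_comm]

variable [Fintype W] [Fintype B]

theorem linearCombination_faceChain {A : Type*} [AddCommGroup A] (u : W × B → A) (f : F) :
    Fintype.linearCombination ℤ u (faceChain ℓ wv bv f) =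
      ∑ i, (u (wv f i, bv f i) - u (wv f (cyc i), bv f i)) := by
  simp [faceChain_eq_sum, Fintype.linearCombination_apply_single]

theorem exists_potential_of_face_sums_eq_zero {A : Type*} [AddCommGroup A] [DivisibleBy A ℤ]
    (E : W → B → Prop)
    (hgen : ∀ ch : W × B → ℤ, (∀ w b, ¬ E w b → ch (w, b) = 0) →
      (∀ w, ∑ b, ch (w, b) = 0) → (∀ b, ∑ w, ch (w, b) = 0) →
      ch ∈ Submodule.span ℤ (Set.range (faceChain ℓ wv bv)))
    (u : W × B → A) (hu : ∀ f, ∑ i, (u (wv f i, bv f i) - u (wv f (cyc i), bv f i)) = 0) :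
    ∃ x : W → A, ∃ y : B → A, ∀ w b, E w b → u (w, b) = x w + y b := by
  refine exists_potential_of_cycle_sums_eq_zero E u fun ch hch hbd => ?_
  have hfaces : Submodule.span ℤ (Set.range (faceChain ℓ wv bv)) ≤
      LinearMap.ker (Fintype.linearCombination ℤ u) :=
    Submodule.span_le.mpr <| Set.range_subset_iff.mpr fun f => by
      simp [linearCombination_faceChain, hu]
  exact hfaces <| hgen ch hch (congr_fun congr($hbd.1)) (congr_fun congr($hbd.2))

end Faces

theorem exp_mul_I_sq_eq_one_iff (t : ℝ) : exp (t * I) ^ 2 = 1 ↔ (t : AddCircle π) = 0 := by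
  rw [← exp_nat_mul, exp_eq_one_iff, AddCircle.coe_eq_zero_iff]
  refine exists_congr fun n => ?_
  rw [zsmul_eq_mul, eq_comm (b := t), ← ofReal_inj]
  push_cast
  constructor <;> intro h
  · linear_combination (-I / 2) * h + (t - n * π) * I_sq
  · linear_combination (2 * I) * h

theorem faceAltProd_eq_exp {W B F : Type} (ℓ : F → ℕ)
    (wv : (f : F) → Fin (ℓ f) → W) (bv : (f : F) → Fin (ℓ f) → B)
    (c : W → B → ℂ) (θ : W × B → ℝ) (f : F)
    (hc : ∀ i, c (wv f i) (bv f i) = exp (θ (wv f i, bv f i) * I) ∧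
      c (wv f (cyc i)) (bv f i) = exp (θ (wv f (cyc i), bv f i) * I)) :
    faceAltProd ℓ wv bv c f =
      exp (↑(∑ i, (θ (wv f i, bv f i) - θ (wv f (cyc i), bv f i))) * I) := by
  rw [faceAltProd, Finset.sum_sub_distrib, ofReal_sub, sub_mul, exp_sub, ofReal_sum, ofReal_sum,
    Finset.sum_mul, Finset.sum_mul, exp_sum, exp_sum]
  congr 1 <;> exact Finset.prod_congr rfl fun i _ => by simp only [hc i]

theorem complex_signs_gauge_to_real_signs_general
    {W B F : Type} [Fintype W] [Fintype B]
    [DecidableEq W] [DecidableEq B]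
    (E : W → B → Prop)
    (ℓ : F → ℕ)
    (wv : (f : F) → Fin (ℓ f) → W) (bv : (f : F) → Fin (ℓ f) → B)
    (hfaceE : ∀ f i, E (wv f i) (bv f i) ∧ E (wv f (cyc i)) (bv f i))
    (hgen : ∀ ch : W × B → ℤ, (∀ w b, ¬ E w b → ch (w, b) = 0) →
      (∀ w, ∑ b, ch (w, b) = 0) → (∀ b, ∑ w, ch (w, b) = 0) →
      ch ∈ Submodule.span ℤ (Set.range (faceChain ℓ wv bv)))
    (c : W → B → ℂ)
    (hunimod : ∀ w b, E w b → ‖c w b‖ = 1)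
    (hKast : ∀ f : F, faceAltProd ℓ wv bv c f = (-1 : ℂ) ^ (ℓ f + 1)) :
    ∃ g : W → ℂ, ∃ h : B → ℂ,
      (∀ w, ‖g w‖ = 1) ∧ (∀ b, ‖h b‖ = 1) ∧
      ∀ w b, E w b → g w * c w b * h b = 1 ∨ g w * c w b * h b = -1 := by
  have : Fact (0 < π) := ⟨Real.pi_pos⟩
  set θ : W × B → ℝ := fun e => arg (c e.1 e.2)
  have hc : ∀ w b, E w b → c w b = exp (θ (w, b) * I) := fun w b h => by
    simpa [hunimod w b h] using (norm_mul_exp_arg_mul_I (c w b)).symm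
  have hface (f : F) :
      ∑ i, ((θ (wv f i, bv f i) : AddCircle π) - θ (wv f (cyc i), bv f i)) = 0 := by
    have hexp := faceAltProd_eq_exp ℓ wv bv c θ f
      fun i => ⟨hc _ _ (hfaceE f i).1, hc _ _ (hfaceE f i).2⟩
    rw [hKast f] at hexp
    have hsq := (exp_mul_I_sq_eq_one_iff _).mp (by rw [← hexp, ← pow_mul, pow_mul']; simp)
    simpa [QuotientAddGroup.mk_sum] using hsq
  obtain ⟨x, y, hxy⟩ := exists_potential_of_face_sums_eq_zero (A := AddCircle π)
    ℓ wv bv E hgen (fun e => θ e) hface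
  choose x' hx' using fun w => QuotientAddGroup.mk_surjective (x w)
  choose y' hy' using fun b => QuotientAddGroup.mk_surjective (y b)
  refine ⟨fun w => exp (↑(-x' w) * I), fun b => exp (↑(-y' b) * I),
    fun w => norm_exp_ofReal_mul_I _, fun b => norm_exp_ofReal_mul_I _, fun w b h => ?_⟩
  have hphase : ((θ (w, b) - x' w - y' b : ℝ) : AddCircle π) = 0 := by
    rw [AddCircle.coe_sub, AddCircle.coe_sub, hxy w b h, hx', hy', add_sub_cancel_left, sub_self]
  have hgauge : exp (↑(-x' w) * I) * c w b * exp (↑(-y' b) * I) =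
      exp (↑(θ (w, b) - x' w - y' b) * I) := by
    rw [hc w b h, ← exp_add, ← exp_add]
    congr 1
    push_cast
    ring
  rw [hgauge, ← sq_eq_one_iff, exp_mul_I_sq_eq_one_iff]
  exact hphase

/-- Any Kasteleyn sign function with complex unimodular signs is diagonally
(gauge) equivalent to one with real signs `±1`: if `c : E → U(1)` satisfies that the
alternating product of `c` around every bounded face of degree `2ℓ` equals `(-1)^{ℓ+1}`,
then there exist unimodular vertex functions `g : W → U(1)`, `h : B → U(1)` such that
`g(w) c(w,b) h(b) ∈ {±1}` for every edge `wb`. (The disk embedding is encoded by the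
hypothesis that the bounded faces generate the cycle space.) -/
theorem complex_signs_gauge_to_real_signs
    {W B F : Type} [Fintype W] [Fintype B] [Fintype F]
    [DecidableEq W] [DecidableEq B]
    (E : W → B → Prop)
    (ℓ : F → ℕ) (hℓ : ∀ f, 1 ≤ ℓ f)
    (wv : (f : F) → Fin (ℓ f) → W) (bv : (f : F) → Fin (ℓ f) → B)
    (hfaceE : ∀ f i, E (wv f i) (bv f i) ∧ E (wv f (cyc i)) (bv f i))
    (hgen : ∀ ch : W × B → ℤ, (∀ w b, ¬ E w b → ch (w, b) = 0) →
      (∀ w, ∑ b, ch (w, b) = 0) → (∀ b, ∑ w, ch (w, b) = 0) →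
      ch ∈ Submodule.span ℤ (Set.range (faceChain ℓ wv bv)))
    (c : W → B → ℂ)
    (hunimod : ∀ w b, E w b → ‖c w b‖ = 1)
    (hKast : ∀ f : F, faceAltProd ℓ wv bv c f = (-1 : ℂ) ^ (ℓ f + 1)) :
    ∃ g : W → ℂ, ∃ h : B → ℂ,
      (∀ w, ‖g w‖ = 1) ∧ (∀ b, ‖h b‖ = 1) ∧
      ∀ w b, E w b → g w * c w b * h b = 1 ∨ g w * c w b * h b = -1 :=
  complex_signs_gauge_to_real_signs_general E ℓ wv bv hfaceE hgen c hunimod hKast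
end

section
/- Let T1 and T2 be two combinatorially equivalent convex tilings of the same convex polygon R, with the same tile edge directions and the same tile orientations, and suppose corresponding tiles have equal areas. Then T1 = T2. -/
/-- Key lemma: in a space where a codimension-1 subspace `N` is negative definite for `q`,
if `q x > 0`, `d ≠ 0`, `polar q x d = - q d` and `q d < 2 q x`, then `q d < 0`. -/
lemma key_neg {V : Type} [AddCommGroup V] [Module ℝ V] [FiniteDimensional ℝ V]
    (q : QuadraticMap ℝ V ℝ) (N : Submodule ℝ V)
    (hcodim : Module.finrank ℝ N + 1 = Module.finrank ℝ V)
    (hneg : ∀ v ∈ N, v ≠ 0 → q v < 0)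
    (x d : V) (hp : 0 < q x) (hd : d ≠ 0)
    (hpolar : QuadraticMap.polar q x d = - q d)
    (hlt : q d < 2 * q x) : q d < 0 := by
  by_contra hge
  push_neg at hge
  have hx0 : x ≠ 0 := by rintro rfl; simp at hp
  by_cases hdep : ∃ c : ℝ, d = c • x
  · obtain ⟨c, rfl⟩ := hdep
    rw [QuadraticMap.polar_smul_right, QuadraticMap.polar_self,
      QuadraticMap.map_smul] at hpolar
    rw [QuadraticMap.map_smul] at hlt
    simp only [smul_eq_mul, nsmul_eq_mul, Nat.cast_ofNat] at hpolar hlt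
    have hcc : c * (c + 2) = 0 := by
      rcases mul_eq_zero.mp (show (c * (c + 2)) * q x = 0 by linarith) with h | h
      · exact h
      · exact absurd h hp.ne'
    rcases mul_eq_zero.mp hcc with h | h
    · exact hd (by rw [h, zero_smul])
    · have hc2 : c = -2 := by linarith
      rw [hc2] at hlt
      nlinarith
  · have hli : LinearIndependent ℝ ![x, d] := by
      rw [LinearIndependent.pair_iff]
      intro s t hst
      by_cases ht : t = 0
      · subst ht
        simp only [zero_smul, add_zero] at hst
        exact ⟨(smul_eq_zero.mp hst).resolve_right hx0, rfl⟩
      · exfalso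
        apply hdep
        have h2 : t • d = (-s) • x := by
          rw [neg_smul]
          exact eq_neg_of_add_eq_zero_right hst
        refine ⟨t⁻¹ * (-s), ?_⟩
        rw [mul_smul, ← h2, smul_smul, inv_mul_cancel₀ ht, one_smul]
    have hrange : Set.range ![x, d] = {x, d} := by
      simp only [Matrix.range_cons, Matrix.range_empty, Set.union_empty,
        Set.union_singleton]
      exact Set.pair_comm d x
    set W := Submodule.span ℝ ({x, d} : Set V) with hWdef
    have hW : Module.finrank ℝ W = 2 := by
      rw [hWdef, ← hrange, finrank_span_eq_card hli]
      simp
    have hsup : Module.finrank ℝ ↥(W ⊔ N) ≤ Module.finrank ℝ V :=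
      Submodule.finrank_le _
    have heq := Submodule.finrank_sup_add_finrank_inf_eq W N
    have hne : W ⊓ N ≠ ⊥ := by
      intro h
      rw [h, finrank_bot, hW] at heq
      omega
    obtain ⟨w, hw, hw0⟩ := Submodule.exists_mem_ne_zero_of_ne_bot hne
    obtain ⟨a, b, hab⟩ := Submodule.mem_span_pair.mp ((Submodule.mem_inf.mp hw).1)
    have hqw : q w < 0 := hneg w (Submodule.mem_inf.mp hw).2 hw0
    have hexp : q w = a * a * q x + a * b * (QuadraticMap.polar q x d) + b * b * q d := by
      rw [← hab, QuadraticMap.map_add (⇑q) (a • x) (b • d), QuadraticMap.map_smul,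
        QuadraticMap.map_smul, QuadraticMap.polar_smul_left, QuadraticMap.polar_smul_right]
      simp only [smul_eq_mul]
      ring
    rw [hpolar] at hexp
    nlinarith [sq_nonneg (a - 2 * b), mul_nonneg hge (sq_nonneg (a - 2 * b)),
      sq_nonneg a, mul_nonneg hge (sq_nonneg a),
      mul_nonneg (mul_nonneg hge hge) (sq_nonneg (a - 2 * b))]

/-- Two combinatorially equivalent convex tilings of the same convex
polygon `R`, with the same tile edge directions, the same tile orientations and equal
corresponding tile areas, coincide. Abstract formulation (as in the proof): let `C` be a
convex set in a product `Π w, V w` of tile shape spaces (the set of tilings with fixed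
combinatorics and orientations), let `q w` be the area quadratic form of the `w`-th tile,
of signature `(1, n_w - 3)` on `V w`, and suppose the total area `∑ w, q w` is constant
on `C` (it equals the area of `R`). If `x, y ∈ C` have, for every tile `w`, positive
areas, the same orientation (polar form positive: `polar (q w) (x w) (y w) > 0`) and
equal areas `q w (x w) = q w (y w)`, then `x = y`. -/
theorem tiling_determined_by_areas_and_orientations
    {ι : Type} [Fintype ι]
    (V : ι → Type) [∀ i, AddCommGroup (V i)] [∀ i, Module ℝ (V i)]
    [∀ i, FiniteDimensional ℝ (V i)]
    (n : ι → ℕ) (hn : ∀ i, 3 ≤ n i)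
    (hdim : ∀ i, Module.finrank ℝ (V i) = n i - 2)
    (q : (i : ι) → QuadraticMap ℝ (V i) ℝ)
    -- signature (1, n i - 3):
    (hsig : ∀ i, ∃ P N : Submodule ℝ (V i),
      P ⊔ N = ⊤ ∧ P ⊓ N = ⊥ ∧
      Module.finrank ℝ P = 1 ∧ Module.finrank ℝ N = n i - 3 ∧
      (∀ v ∈ P, v ≠ 0 → 0 < q i v) ∧ (∀ v ∈ N, v ≠ 0 → q i v < 0))
    (C : Set ((i : ι) → V i)) (hC : Convex ℝ C)
    (S : ℝ) (hsum : ∀ x ∈ C, ∑ i, q i (x i) = S)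
    (x y : (i : ι) → V i) (hx : x ∈ C) (hy : y ∈ C)
    (hxpos : ∀ i, 0 < q i (x i))
    (hsame : ∀ i, 0 < QuadraticMap.polar (q i) (x i) (y i))
    (harea : ∀ i, q i (x i) = q i (y i)) :
    x = y := by
  -- the midpoint of x and y lies in C
  set z : (i : ι) → V i := (2⁻¹ : ℝ) • x + (2⁻¹ : ℝ) • y with hzdef
  have hz : z ∈ C := hC hx hy (by norm_num) (by norm_num) (by norm_num)
  -- q of the difference
  have hd_eq : ∀ i, q i (y i - x i)
      = 2 * q i (x i) - QuadraticMap.polar (q i) (x i) (y i) := by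
    intro i
    have h1 : q i (y i) = q i (x i + (y i - x i)) := by
      congr 1; abel
    rw [QuadraticMap.map_add (⇑(q i)) (x i) (y i - x i), QuadraticMap.polar_sub_right,
      QuadraticMap.polar_self, ← harea i] at h1
    simp only [nsmul_eq_mul, Nat.cast_ofNat] at h1
    linarith
  -- q of the midpoint
  have hq_z : ∀ i, q i (z i) = q i (x i) - q i (y i - x i) / 4 := by
    intro i
    have hz_i : z i = (2⁻¹ : ℝ) • (x i) + (2⁻¹ : ℝ) • (y i) := rfl
    rw [hz_i, QuadraticMap.map_add (⇑(q i)) _ _, QuadraticMap.map_smul,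
      QuadraticMap.map_smul, QuadraticMap.polar_smul_left,
      QuadraticMap.polar_smul_right, hd_eq i, ← harea i]
    simp only [smul_eq_mul]
    ring
  -- total area of differences is 0
  have hS1 := hsum x hx
  have hS2 := hsum z hz
  have hsum0 : ∑ i, q i (y i - x i) = 0 := by
    have h3 : ∑ i, (q i (x i) - q i (y i - x i) / 4) = S := by
      rw [← hS2]
      exact Finset.sum_congr rfl (fun i _ => (hq_z i).symm)
    rw [Finset.sum_sub_distrib] at h3
    have h4 : ∑ i, q i (y i - x i) / 4 = (∑ i, q i (y i - x i)) / 4 :=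
      (Finset.sum_div _ _ _).symm
    rw [h4] at h3
    linarith
  -- each difference has nonpositive area, zero only if zero
  have hle : ∀ i, q i (y i - x i) ≤ 0 ∧ (q i (y i - x i) = 0 → y i - x i = 0) := by
    intro i
    by_cases hdi : y i - x i = 0
    · refine ⟨le_of_eq ?_, fun _ => hdi⟩
      rw [hdi]; simp
    · obtain ⟨P, N, hPN, hPiN, hrP, hrN, hpos, hneg⟩ := hsig i
      have hcodim : Module.finrank ℝ N + 1 = Module.finrank ℝ (V i) := by
        rw [hrN, hdim i]
        have := hn i
        omega
      have hlt : q i (y i - x i) < 2 * q i (x i) := by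
        rw [hd_eq i]; linarith [hsame i]
      have hpol : QuadraticMap.polar (q i) (x i) (y i - x i) = - q i (y i - x i) := by
        rw [QuadraticMap.polar_sub_right, QuadraticMap.polar_self, hd_eq i]
        simp only [nsmul_eq_mul, Nat.cast_ofNat]
        ring
      have hk := key_neg (q i) N hcodim hneg (x i) (y i - x i) (hxpos i) hdi hpol hlt
      exact ⟨hk.le, fun h => absurd h hk.ne⟩
  have hzero : ∀ i ∈ Finset.univ, q i (y i - x i) = 0 :=
    (Finset.sum_eq_zero_iff_of_nonpos (fun i _ => (hle i).1)).mp hsum0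
  funext i
  have := (hle i).2 (hzero i (Finset.mem_univ i))
  have := sub_eq_zero.mp this
  exact this.symm
end

section
/- If V_T(σ) is nonempty, it is bounded: the set of intercept vectors (i_b) ∈ R^{B_int} defining homology tilings of a fixed convex polygon R in which every tile has positive area (with fixed orientations) is a bounded subset of R^{B_int}, because the tile areas are quadratic in the intercepts and sum to the fixed area of R. -/
/-!
If `C` were unbounded, then (being open and convex in finite dimensions) it would contain a ray
`x + t • v`, `t ≥ 0`, from each of its points, for one fixed direction `v ≠ 0`. Along such a ray
each `q i` is a quadratic polynomial in `t` which is positive and, since the others are positive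
too, bounded above by the constant sum `S`; hence its `t²` and `t` coefficients vanish. The
`t`-coefficient `polar (Qf i) x v + L i v` is affine in `x` and vanishes on the open set `C`, so
it vanishes identically. So every `q i` is invariant under translation by `v`, against
nondegeneracy.
-/

open Filter Topology Bornology Polynomial

section RecessionDirection

variable {E : Type*} [AddCommGroup E] [Module ℝ E] [TopologicalSpace E]
  [IsTopologicalAddGroup E] [ContinuousSMul ℝ E]

theorem Convex.add_smul_mem_of_isClosed {K : Set E} (hK : Convex ℝ K) (hKc : IsClosed K)
    {x₀ v : E} (hray : ∀ t : ℝ, 0 ≤ t → x₀ + t • v ∈ K) {x : E} (hx : x ∈ K) {t : ℝ}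
    (ht : 0 ≤ t) : x + t • v ∈ K := by
  have hlim : Tendsto (fun s : ℝ => x + s • (x₀ + (t / s) • v - x)) (𝓝[>] 0)
      (𝓝 (x + t • v)) := by
    have h0 : Tendsto (fun s : ℝ => x + s • (x₀ - x) + t • v) (𝓝[>] 0) (𝓝 (x + t • v)) := by
      have hs : Tendsto (fun s : ℝ => s) (𝓝[>] 0) (𝓝 0) := nhdsWithin_le_nhds
      simpa using ((hs.smul_const (x₀ - x)).const_add x).add_const (t • v)
    refine h0.congr' (eventually_nhdsWithin_of_forall fun s (hs : 0 < s) => ?_)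
    simp only [smul_sub, smul_add, smul_smul, mul_div_cancel₀ t hs.ne']
    abel
  refine hKc.mem_of_tendsto hlim ?_
  filter_upwards [Ioc_mem_nhdsGT one_pos] with s hs
  exact hK.add_smul_sub_mem hx (hray _ (div_nonneg ht hs.1.le)) ⟨hs.1.le, hs.2⟩

end RecessionDirection

section RecessionDirectionFiniteDimensional

variable {E : Type*} [NormedAddCommGroup E] [NormedSpace ℝ E] [FiniteDimensional ℝ E]

theorem exists_ray_mem_closure_of_not_isBounded {C : Set E} (hC : Convex ℝ C)
    (hub : ¬IsBounded C) {x₀ : E} (hx₀ : x₀ ∈ C) :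
    ∃ v ≠ 0, ∀ t : ℝ, 0 ≤ t → x₀ + t • v ∈ closure C := by
  have hfar : ∀ n : ℕ, ∃ x ∈ C, (n : ℝ) < ‖x - x₀‖ := by
    intro n
    by_contra! hcon
    exact hub ((Metric.isBounded_closedBall (x := x₀) (r := n)).subset fun x hx => by
      simpa [dist_eq_norm] using hcon x hx)
  choose xs hxsC hxsn using hfar
  have hpos n : 0 < ‖xs n - x₀‖ := (Nat.cast_nonneg n).trans_lt (hxsn n)
  obtain ⟨v, hv, φ, hφ, hlim⟩ := (isCompact_sphere (0 : E) 1).tendsto_subseq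
    (x := fun n => ‖xs n - x₀‖⁻¹ • (xs n - x₀)) fun n => by simp [norm_smul, (hpos n).ne']
  refine ⟨v, by rintro rfl; simp at hv, fun t ht =>
    mem_closure_of_tendsto (tendsto_const_nhds.add (hlim.const_smul t)) ?_⟩
  filter_upwards [hφ.tendsto_atTop.eventually_ge_atTop ⌈t⌉₊] with n hn
  have hle : t ≤ ‖xs (φ n) - x₀‖ :=
    (Nat.le_ceil t).trans ((Nat.cast_le.2 hn).trans (hxsn _).le)
  simpa [smul_smul, div_eq_mul_inv] using hC.add_smul_sub_mem hx₀ (hxsC (φ n))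
    ⟨div_nonneg ht (hpos _).le, div_le_one_of_le₀ hle (hpos _).le⟩

theorem exists_ne_zero_forall_add_smul_mem_of_not_isBounded {C : Set E} (hCo : IsOpen C)
    (hC : Convex ℝ C) (hub : ¬IsBounded C) :
    ∃ v ≠ 0, ∀ x ∈ C, ∀ t : ℝ, 0 ≤ t → x + t • v ∈ C := by
  obtain ⟨x₀, hx₀⟩ := nonempty_of_not_isBounded hub
  obtain ⟨v, hv, hray⟩ := exists_ray_mem_closure_of_not_isBounded hC hub hx₀
  refine ⟨v, hv, fun x hx t ht => ?_⟩
  have hfar := hC.closure.add_smul_mem_of_isClosed isClosed_closure hray (subset_closure hx)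
    (by positivity : 0 ≤ 2 * t)
  have hmid := hC.combo_interior_closure_mem_interior (hCo.interior_eq.symm ▸ hx) hfar
    (a := (1 / 2 : ℝ)) (b := 1 / 2) (by norm_num) (by norm_num) (by norm_num)
  rw [hCo.interior_eq] at hmid
  convert hmid using 1
  module

end RecessionDirectionFiniteDimensional

theorem quadratic_coeffs_eq_zero_of_abs_le {a b c M : ℝ}
    (h : ∀ t, 0 ≤ t → |a * t ^ 2 + b * t + c| ≤ M) : a = 0 ∧ b = 0 := by
  set P : ℝ[X] := C a * X ^ 2 + C b * X + C c
  have hbdd : IsBoundedUnder (· ≤ ·) atTop fun t => |P.eval t| :=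
    ⟨M, eventually_map.2 <| (eventually_ge_atTop 0).mono fun t ht => by simpa [P] using h t ht⟩
  have hP := eq_C_of_degree_le_zero (P.isBoundedUnder_abs_atTop_iff.1 hbdd)
  constructor
  · simpa [P] using congr_arg (coeff · 2) hP
  · simpa [P] using congr_arg (coeff · 1) hP

theorem QuadraticMap.apply_add_smul {R M : Type*} [CommRing R] [AddCommGroup M] [Module R M]
    (Q : QuadraticMap R M R) (x v : M) (t : R) :
    Q (x + t • v) = t ^ 2 * Q v + t * polar Q x v + Q x := by
  have h := Q.polar_smul_right t x v
  rw [polar, QuadraticMap.map_smul, smul_eq_mul, smul_eq_mul] at h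
  linear_combination h

theorem LinearMap.eq_zero_of_forall_mem_eq {𝕜 E F : Type*} [NontriviallyNormedField 𝕜]
    [AddCommGroup E] [TopologicalSpace E] [IsTopologicalAddGroup E] [Module 𝕜 E]
    [ContinuousSMul 𝕜 E] [AddCommGroup F] [Module 𝕜 F] {U : Set E} (hU : IsOpen U)
    (hne : U.Nonempty) (f : E →ₗ[𝕜] F) {a : F} (h : ∀ x ∈ U, f x = a) : f = 0 := by
  obtain ⟨x₀, hx₀⟩ := hne
  have hker : (fun x => x - x₀) '' U ⊆ LinearMap.ker f := by
    rintro _ ⟨x, hx, rfl⟩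
    simp [h x hx, h x₀ hx₀]
  exact LinearMap.ker_eq_top.1 <| (LinearMap.ker f).eq_top_of_nonempty_interior'
    ⟨0, (isOpenMap_sub_right x₀ U hU).subset_interior_iff.2 hker ⟨x₀, hx₀, sub_self x₀⟩⟩

theorem positivity_region_bounded_general
    {m k : ℕ}
    (Qf : Fin k → QuadraticMap ℝ (Fin m → ℝ) ℝ)
    (L : Fin k → (Fin m → ℝ) →ₗ[ℝ] ℝ)
    (c : Fin k → ℝ)
    (q : Fin k → (Fin m → ℝ) → ℝ)
    (hq : ∀ i x, q i x = Qf i x + L i x + c i)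
    (S : ℝ) (hsum : ∀ x, ∑ i, q i x = S)
    (C : Set (Fin m → ℝ)) (hCopen : IsOpen C) (hCconv : Convex ℝ C)
    (hpos : ∀ i, ∀ x ∈ C, 0 < q i x)
    -- nondegeneracy: no nonzero direction leaves all the `q_i` invariant:
    (hnondeg : ∀ v : Fin m → ℝ, v ≠ 0 → ∃ i, ¬ ∀ x, q i (x + v) = q i x) :
    Bornology.IsBounded C := by
  by_contra hub
  obtain ⟨v, hv, hray⟩ := exists_ne_zero_forall_add_smul_mem_of_not_isBounded hCopen hCconv hub
  obtain ⟨i, hi⟩ := hnondeg v hv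
  have hexp x (t : ℝ) :
      q i (x + t • v) = Qf i v * t ^ 2 + (QuadraticMap.polar (Qf i) x v + L i v) * t + q i x := by
    simp only [hq, QuadraticMap.apply_add_smul, map_add, map_smul, smul_eq_mul]
    ring
  have hcoeff x (hx : x ∈ C) : Qf i v = 0 ∧ QuadraticMap.polar (Qf i) x v + L i v = 0 :=
    quadratic_coeffs_eq_zero_of_abs_le (M := S) fun t ht => by
      have hy := hray x hx t ht
      rw [← hexp, abs_of_pos (hpos i _ hy), ← hsum]
      exact Finset.single_le_sum (fun j _ => (hpos j _ hy).le) (Finset.mem_univ i)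
  obtain ⟨x₀, hx₀⟩ := nonempty_of_not_isBounded hub
  have hpolar : (Qf i).polarBilin.flip v = 0 :=
    LinearMap.eq_zero_of_forall_mem_eq hCopen ⟨x₀, hx₀⟩ _ (a := -L i v) fun x hx => by
      simpa [eq_neg_iff_add_eq_zero] using (hcoeff x hx).2
  have hpolar_apply x : QuadraticMap.polar (Qf i) x v = 0 := by
    simpa using LinearMap.congr_fun hpolar x
  have hL : L i v = 0 := by simpa [hpolar_apply] using (hcoeff x₀ hx₀).2
  refine hi fun x => ?_
  simpa [(hcoeff x₀ hx₀).1, hpolar_apply, hL] using hexp x 1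

/-- The region `V_T(σ)` of homology tilings with positive tile areas and
fixed orientations is bounded if nonempty. Abstract formulation: let
`q_1, …, q_k : ℝ^m → ℝ` be quadratic polynomials (each a quadratic form plus a linear
form plus a constant) whose sum is identically constant, and let `C ⊆ ℝ^m` be a nonempty
open convex set on which every `q_i` is positive. Assume the nondegeneracy condition
that there is no nonzero direction `v` leaving every `q_i` translation-invariant. Then
`C` is bounded. -/
theorem positivity_region_bounded
    {m k : ℕ}
    (Qf : Fin k → QuadraticMap ℝ (Fin m → ℝ) ℝ)
    (L : Fin k → (Fin m → ℝ) →ₗ[ℝ] ℝ)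
    (c : Fin k → ℝ)
    (q : Fin k → (Fin m → ℝ) → ℝ)
    (hq : ∀ i x, q i x = Qf i x + L i x + c i)
    (S : ℝ) (hsum : ∀ x, ∑ i, q i x = S)
    (C : Set (Fin m → ℝ)) (hCopen : IsOpen C) (hCconv : Convex ℝ C)
    (hCne : C.Nonempty)
    (hpos : ∀ i, ∀ x ∈ C, 0 < q i x)
    -- nondegeneracy: no nonzero direction leaves all the `q_i` invariant:
    (hnondeg : ∀ v : Fin m → ℝ, v ≠ 0 → ∃ i, ¬ ∀ x, q i (x + v) = q i x) :
    Bornology.IsBounded C :=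
  positivity_region_bounded_general Qf L c q hq S hsum C hCopen hCconv hpos hnondeg
end

section
/- For the dimer model on a finite bipartite graph with Kasteleyn matrix K and at least one perfect matching, the probability that a fixed edge wb appears in a random perfect matching (weighted by the product of edge weights) equals K(w,b) K^{-1}(b,w), and this quantity is invariant under gauge transformations K → D_W K D_B with invertible diagonal D_W, D_B. -/
/-!
Expanding `det K` along row `w` shows that `K w b * adjugate K b w` is the signed sum of the
determinant terms of the matchings using the edge `wb`. The Kasteleyn condition says the
triangle inequality `‖∑ σ, term σ‖ ≤ ∑ σ, ‖term σ‖` is an equality, so in the strictly convex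
space `ℂ` every term lies on the ray of `det K`: `term σ = (det K / ‖det K‖) * weight σ`.
Dividing by `det K` turns the signed partial sum into the probability. Gauge invariance holds
because `(D_W K D_B)⁻¹ = D_B⁻¹ K⁻¹ D_W⁻¹` and the diagonal factors cancel entrywise.
-/

open Finset Matrix

theorem sameRay_sum_of_norm_sum_eq_sum_norm {E ι : Type*} [NormedAddCommGroup E]
    [NormedSpace ℝ E] [StrictConvexSpace ℝ E] {s : Finset ι} {z : ι → E}
    (h : ‖∑ j ∈ s, z j‖ = ∑ j ∈ s, ‖z j‖) {i : ι} (hi : i ∈ s) :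
    SameRay ℝ (z i) (∑ j ∈ s, z j) := by
  classical
  rw [← add_sum_erase s z hi, ← add_sum_erase s _ hi] at h
  rw [← add_sum_erase s z hi]
  refine (SameRay.refl _).add_right (sameRay_iff_norm_add.2 (le_antisymm (norm_add_le _ _) ?_))
  rw [h]
  gcongr
  exact norm_sum_le _ _

namespace Matrix

variable {n R : Type*} [Fintype n] [DecidableEq n]

def detTerm [CommRing R] (A : Matrix n n R) (σ : Equiv.Perm n) : R :=
  Equiv.Perm.sign σ * ∏ i, A i (σ i)

theorem norm_detTerm {𝕜 : Type*} [NormedField 𝕜] (A : Matrix n n 𝕜) (σ : Equiv.Perm n) :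
    ‖A.detTerm σ‖ = ∏ i, ‖A i (σ i)‖ := by
  rcases Int.units_eq_one_or (Equiv.Perm.sign σ) with h | h <;> simp [detTerm, h]

theorem det_eq_sum_detTerm [CommRing R] (A : Matrix n n R) : A.det = ∑ σ, A.detTerm σ := by
  rw [← det_transpose, det_apply']
  rfl

theorem mul_adjugate_apply_eq_sum_detTerm [CommRing R] (A : Matrix n n R) (i j : n) :
    A i j * A.adjugate j i = ∑ σ : Equiv.Perm n, if σ i = j then A.detTerm σ else 0 := by
  rw [adjugate_apply, det_eq_sum_detTerm, mul_sum]
  refine sum_congr rfl fun σ _ => ?_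
  simp only [detTerm, ← mul_prod_erase univ _ (mem_univ i), updateRow_self]
  rw [prod_congr rfl fun k hk => by rw [updateRow_ne (ne_of_mem_erase hk)]]
  split_ifs with h
  · subst h
    simp only [Pi.single_eq_same, one_mul]
    ring
  · simp [h]

theorem inv_diagonal_of_ne_zero {K : Type*} [Field K] {d : n → K} (hd : ∀ i, d i ≠ 0) :
    (diagonal d)⁻¹ = diagonal fun i => (d i)⁻¹ :=
  inv_eq_left_inv <| by
    rw [diagonal_mul_diagonal, ← diagonal_one]
    exact congrArg diagonal (funext fun i => inv_mul_cancel₀ (hd i))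

theorem apply_mul_inv_apply_diagonal_mul_mul_diagonal {K : Type*} [Field K] (A : Matrix n n K)
    {d e : n → K} (hd : ∀ i, d i ≠ 0) (he : ∀ i, e i ≠ 0) (i j : n) :
    (diagonal d * A * diagonal e) i j * (diagonal d * A * diagonal e)⁻¹ j i =
      A i j * A⁻¹ j i := by
  rw [mul_inv_rev, mul_inv_rev, inv_diagonal_of_ne_zero hd, inv_diagonal_of_ne_zero he]
  simp only [mul_diagonal, diagonal_mul]
  field_simp [hd i, he j]

theorem norm_det_smul_detTerm {A : Matrix n n ℂ}
    (hA : ‖A.det‖ = ∑ σ : Equiv.Perm n, ∏ i, ‖A i (σ i)‖) (σ : Equiv.Perm n) : ‖A.det‖ • A.detTerm σ = (∏ i, ‖A i (σ i)‖) • A.det := by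
  have hsum : ‖∑ τ, A.detTerm τ‖ = ∑ τ, ‖A.detTerm τ‖ := by
    simpa only [← det_eq_sum_detTerm, norm_detTerm] using hA
  have := (sameRay_sum_of_norm_sum_eq_sum_norm hsum (mem_univ σ)).norm_smul_eq
  rwa [← det_eq_sum_detTerm, norm_detTerm, eq_comm] at this

theorem apply_mul_inv_apply_eq_div {A : Matrix n n ℂ}
    (hA : ‖A.det‖ = ∑ σ : Equiv.Perm n, ∏ i, ‖A i (σ i)‖) (i j : n) :
    A i j * A⁻¹ j i =
      (((∑ σ : Equiv.Perm n, if σ i = j then ∏ k, ‖A k (σ k)‖ else 0) /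
        ∑ σ : Equiv.Perm n, ∏ k, ‖A k (σ k)‖ : ℝ) : ℂ) := by
  have hrow : (‖A.det‖ : ℂ) * (A i j * A.adjugate j i) =
      (∑ σ : Equiv.Perm n, if σ i = j then ∏ k, ‖A k (σ k)‖ else 0 : ℝ) * A.det := by
    rw [mul_adjugate_apply_eq_sum_detTerm, mul_sum]
    push_cast
    rw [sum_mul]
    refine sum_congr rfl fun σ _ => ?_
    split_ifs
    · simpa only [Complex.real_smul] using norm_det_smul_detTerm hA σ
    · simp
  rw [← hA, inv_def, smul_apply, smul_eq_mul, mul_left_comm]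
  rcases eq_or_ne A.det 0 with h0 | h0
  · -- both sides are junk zeros: `Ring.inverse 0 = 0` and `x / 0 = 0`
    simp [h0]
  · rw [Ring.inverse_eq_inv', Complex.ofReal_div]
    have : (‖A.det‖ : ℂ) ≠ 0 := by simpa using h0
    field_simp
    linear_combination hrow

end Matrix

theorem dimer_edge_probability_general {n : ℕ}
    (K : Matrix (Fin n) (Fin n) ℂ)
    (hKast : ‖K.det‖ =
      ∑ σ : Equiv.Perm (Fin n), ∏ w, ‖K w (σ w)‖)
    (w b : Fin n) :
    K w b * K⁻¹ b w =
      (((∑ σ : Equiv.Perm (Fin n),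
          if σ w = b then ∏ w', ‖K w' (σ w')‖ else 0) /
        (∑ σ : Equiv.Perm (Fin n), ∏ w', ‖K w' (σ w')‖) : ℝ) : ℂ) ∧
    ∀ (DW DB : Fin n → ℂ), (∀ i, DW i ≠ 0) → (∀ i, DB i ≠ 0) →
      (Matrix.of fun i j => DW i * K i j * DB j) w b *
        (Matrix.of fun i j => DW i * K i j * DB j)⁻¹ b w = K w b * K⁻¹ b w := by
  refine ⟨apply_mul_inv_apply_eq_div hKast w b, fun DW DB hDW hDB => ?_⟩
  have hgauge : (Matrix.of fun i j => DW i * K i j * DB j) = diagonal DW * K * diagonal DB := by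
    ext i j
    simp [mul_diagonal, diagonal_mul]
  rw [hgauge]
  exact apply_mul_inv_apply_diagonal_mul_mul_diagonal K hDW hDB w b

/-- For the dimer model on a finite bipartite graph with equal parts (both
indexed by `Fin n`), let `K` be a Kasteleyn matrix: the nonzero entries of `K` are the
edges, and `|det K|` equals the weighted sum `∑_m ∏ |K|` over perfect matchings `m`
(permutations using only nonzero entries). If at least one perfect matching exists, then
the probability that a fixed edge `(w, b)` appears in a random matching chosen with
probability proportional to its weight `∏ |K|` equals `K(w,b) K⁻¹(b,w)`; moreover this
quantity is invariant under gauge transformations `K ↦ D_W K D_B` with invertible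
diagonal matrices. -/
theorem dimer_edge_probability {n : ℕ}
    (K : Matrix (Fin n) (Fin n) ℂ)
    (hKast : ‖K.det‖ =
      ∑ σ : Equiv.Perm (Fin n), ∏ w, ‖K w (σ w)‖)
    (hmatch : ∃ σ : Equiv.Perm (Fin n), ∀ w, K w (σ w) ≠ 0)
    (w b : Fin n) :
    K w b * K⁻¹ b w =
      (((∑ σ : Equiv.Perm (Fin n),
          if σ w = b then ∏ w', ‖K w' (σ w')‖ else 0) /
        (∑ σ : Equiv.Perm (Fin n), ∏ w', ‖K w' (σ w')‖) : ℝ) : ℂ) ∧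
    ∀ (DW DB : Fin n → ℂ), (∀ i, DW i ≠ 0) → (∀ i, DB i ≠ 0) →
      (Matrix.of fun i j => DW i * K i j * DB j) w b *
        (Matrix.of fun i j => DW i * K i j * DB j)⁻¹ b w = K w b * K⁻¹ b w :=
  dimer_edge_probability_general K hKast w b
end
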